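/- Let S be a nonempty finite index set and let d, r be positive integers. For each u in S, let p_u be a nonzero vector in ℝ^d with ‖p_u‖₂ ≤ C_p, let p̄_u = p_u/‖p_u‖₂, and let α_u be a real number with 0 ≤ α_u ≤ 1. Let (B_u)_{u∈S} be mutually independent random d×r real matrices (with all relevant moments finite) such that for every u: (i) E[‖B_u‖⁴] ≤ L², where ‖·‖ is the ℓ²→ℓ² operator norm, and (ii) ‖E[B_u B_uᵀ p̄_u] − p̄_u‖₂ ≤ √δ for some δ ≥ 0. Then the expected squared error of the averaged projected update satisfies E[ ‖ (1/|S|) ∑_{u∈S} α_u ( B_u B_uᵀ p_u − p_u ) ‖₂² ] ≤ C_p² δ + (1/|S|) · (max_{u∈S} α_u ‖p_u‖₂²) · (L² + 1). -/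

import Mathlib

open MeasureTheory ProbabilityTheory Matrix

/-- The Euclidean (ℓ²) norm of a vector in `ℝ^n`. -/
noncomputable def evnorm {n : ℕ} (v : Fin n → ℝ) : ℝ := Real.sqrt (∑ i, v i ^ 2)

/-- The ℓ² → ℓ² operator norm of a `d × r` real matrix. -/
noncomputable def l2OpNorm {d r : ℕ} (B : Matrix (Fin d) (Fin r) ℝ) : ℝ :=
  ‖(Matrix.toEuclideanLin B).toContinuousLinearMap‖

/-!
Write `X_u = α_u (B_u B_uᵀ p_u - p_u)`. Applied coordinatewise, additivity of the variance over
independent summands gives `E‖∑ X_u‖² ≤ ‖∑ E X_u‖² + ∑ E‖X_u‖²`. Since `p_u = ‖p_u‖ p̄_u`, the mean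
`E X_u` is `α_u ‖p_u‖` times the bias vector of `p̄_u`, so `‖∑ E X_u‖ ≤ |S| C_p √δ`. Since `B Bᵀ` is
positive semidefinite, `‖B Bᵀ x - x‖² ≤ ‖B Bᵀ x‖² + ‖x‖² ≤ (‖B‖⁴ + 1) ‖x‖²`, and with `α_u² ≤ α_u`
this gives `E‖X_u‖² ≤ α_u ‖p_u‖² (L² + 1)`. Dividing by `|S|²` yields the bound.
-/

open scoped Matrix.Norms.L2Operator

section evnorm

variable {n : ℕ}

lemma evnorm_nonneg (v : Fin n → ℝ) : 0 ≤ evnorm v := Real.sqrt_nonneg _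

lemma evnorm_sq (v : Fin n → ℝ) : evnorm v ^ 2 = ∑ i, v i ^ 2 :=
  Real.sq_sqrt (Finset.sum_nonneg fun _ _ => sq_nonneg _)

lemma evnorm_eq_norm_toLp (v : Fin n → ℝ) : evnorm v = ‖WithLp.toLp 2 v‖ := by
  simp [EuclideanSpace.norm_eq, evnorm]

lemma evnorm_smul (c : ℝ) (v : Fin n → ℝ) : evnorm (c • v) = |c| * evnorm v := by
  simp only [evnorm_eq_norm_toLp, WithLp.toLp_smul, norm_smul, Real.norm_eq_abs]

lemma evnorm_sum_le {ι : Type*} (s : Finset ι) (f : ι → Fin n → ℝ) :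
    evnorm (∑ u ∈ s, f u) ≤ ∑ u ∈ s, evnorm (f u) := by
  simp only [evnorm_eq_norm_toLp, WithLp.toLp_sum]
  exact norm_sum_le _ _

lemma sq_le_evnorm_sq (v : Fin n → ℝ) (i : Fin n) : v i ^ 2 ≤ evnorm v ^ 2 := by
  rw [evnorm_sq]
  exact Finset.single_le_sum (f := fun j => v j ^ 2) (fun _ _ => sq_nonneg _) (Finset.mem_univ i)

lemma evnorm_sub_sq (x y : Fin n → ℝ) :
    evnorm (x - y) ^ 2 = evnorm x ^ 2 + evnorm y ^ 2 - 2 * (x ⬝ᵥ y) := by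
  simp only [evnorm_sq, dotProduct, Finset.mul_sum, ← Finset.sum_add_distrib,
    ← Finset.sum_sub_distrib, Pi.sub_apply]
  exact Finset.sum_congr rfl fun _ _ => by ring

lemma evnorm_smul_inv_smul (v : Fin n → ℝ) : evnorm v • (evnorm v)⁻¹ • v = v := by
  rcases eq_or_ne (evnorm v) 0 with h | h
  · rw [evnorm_eq_norm_toLp, norm_eq_zero] at h
    simp [(WithLp.toLp_eq_zero 2).mp h]
  · exact smul_inv_smul₀ h v

end evnorm

section l2OpNorm

variable {d r : ℕ}

lemma evnorm_mulVec_le (A : Matrix (Fin d) (Fin r) ℝ) (x : Fin r → ℝ) :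
    evnorm (A *ᵥ x) ≤ l2OpNorm A * evnorm x := by
  rw [evnorm_eq_norm_toLp, evnorm_eq_norm_toLp]
  exact A.l2_opNorm_mulVec (WithLp.toLp 2 x)

lemma l2OpNorm_mul_transpose_self_le (A : Matrix (Fin d) (Fin r) ℝ) :
    l2OpNorm (A * Aᵀ) ≤ l2OpNorm A ^ 2 := by
  have h := A.l2_opNorm_mul Aᴴ
  rwa [l2_opNorm_conjTranspose, conjTranspose_eq_transpose_of_trivial, ← sq] at h

lemma evnorm_mul_transpose_mulVec_sub_sq_le (A : Matrix (Fin d) (Fin r) ℝ) (x : Fin d → ℝ) :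
    evnorm ((A * Aᵀ) *ᵥ x - x) ^ 2 ≤ (l2OpNorm A ^ 4 + 1) * evnorm x ^ 2 := by
  have hpsd : 0 ≤ (A * Aᵀ) *ᵥ x ⬝ᵥ x := by
    simpa [dotProduct_comm] using
      (posSemidef_self_mul_conjTranspose A).dotProduct_mulVec_nonneg x
  have hnorm : evnorm ((A * Aᵀ) *ᵥ x) ≤ l2OpNorm A ^ 2 * evnorm x :=
    (evnorm_mulVec_le _ x).trans
      (mul_le_mul_of_nonneg_right (l2OpNorm_mul_transpose_self_le A) (evnorm_nonneg x))
  have hsq := pow_le_pow_left₀ (evnorm_nonneg _) hnorm 2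
  rw [evnorm_sub_sq]
  nlinarith

end l2OpNorm

lemma Fintype.sum_le_card_mul {ι : Type*} [Fintype ι] {f : ι → ℝ} {c : ℝ} (h : ∀ u, f u ≤ c) :
    ∑ u, f u ≤ Fintype.card ι * c := by
  simpa using Finset.sum_le_card_nsmul Finset.univ f c fun u _ => h u

section Independence

variable {Ω ι : Type*} [MeasurableSpace Ω] {μ : Measure Ω} [IsProbabilityMeasure μ] [Fintype ι]

lemma integral_sq_sum_le_of_pairwise_indepFun {X : ι → Ω → ℝ} (hX : ∀ u, MemLp (X u) 2 μ)
    (hind : Pairwise fun u v => X u ⟂ᵢ[μ] X v) :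
    ∫ ω, (∑ u, X u ω) ^ 2 ∂μ ≤ (∑ u, ∫ ω, X u ω ∂μ) ^ 2 + ∑ u, ∫ ω, X u ω ^ 2 ∂μ := by
  have hvar := IndepFun.variance_sum (s := Finset.univ) (fun u _ => hX u)
    fun u _ v _ huv => hind huv
  rw [variance_eq_sub (memLp_finsetSum' _ fun u _ => hX u)] at hvar
  simp only [Pi.pow_apply, Finset.sum_apply] at hvar
  rw [integral_finsetSum _ fun u _ => (hX u).integrable one_le_two] at hvar
  have hle : ∑ u, variance (X u) μ ≤ ∑ u, ∫ ω, X u ω ^ 2 ∂μ :=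
    Finset.sum_le_sum fun u _ => variance_le_expectation_sq (hX u).aestronglyMeasurable
  linarith

lemma integral_evnorm_sum_sq_le_of_pairwise_indepFun {d : ℕ} {X : ι → Ω → Fin d → ℝ}
    (hX : ∀ u i, MemLp (fun ω => X u ω i) 2 μ) (hind : Pairwise fun u v => X u ⟂ᵢ[μ] X v) :
    ∫ ω, evnorm (∑ u, X u ω) ^ 2 ∂μ ≤
      evnorm (∑ u, fun i => ∫ ω, X u ω i ∂μ) ^ 2 + ∑ u, ∫ ω, evnorm (X u ω) ^ 2 ∂μ := by
  have hcoord : ∀ i, ∫ ω, (∑ u, X u ω i) ^ 2 ∂μ ≤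
      (∑ u, ∫ ω, X u ω i ∂μ) ^ 2 + ∑ u, ∫ ω, X u ω i ^ 2 ∂μ := fun i =>
    integral_sq_sum_le_of_pairwise_indepFun (fun u => hX u i)
      fun u v huv => (hind huv).comp (measurable_pi_apply i) (measurable_pi_apply i)
  simp only [evnorm_sq, Finset.sum_apply]
  rw [integral_finsetSum _ fun i _ => (memLp_finsetSum _ fun u _ => hX u i).integrable_sq]
  simp_rw [integral_finsetSum _ fun i _ => (hX _ i).integrable_sq]
  rw [Finset.sum_comm (s := Finset.univ (α := ι)), ← Finset.sum_add_distrib]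
  exact Finset.sum_le_sum fun i _ => hcoord i

end Independence

lemma continuous_smul_mul_transpose_mulVec_sub {d r : ℕ} (a : ℝ) (x : Fin d → ℝ) :
    Continuous fun A : Fin d → Fin r → ℝ => a • ((of A * (of A)ᵀ) *ᵥ x - x) := by
  refine continuous_pi fun i => ?_
  simp only [Pi.smul_apply, Pi.sub_apply, mulVec, mul_apply, dotProduct, transpose_apply,
    of_apply, smul_eq_mul]
  fun_prop

lemma mulVec_sub_eq_evnorm_smul {n : ℕ} (M : Matrix (Fin n) (Fin n) ℝ) (x : Fin n → ℝ) :
    M *ᵥ x - x = evnorm x • (M *ᵥ ((evnorm x)⁻¹ • x) - (evnorm x)⁻¹ • x) := by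
  rw [smul_sub, ← mulVec_smul, evnorm_smul_inv_smul]

lemma evnorm_smul_mul_transpose_mulVec_sub_sq_le {d r : ℕ} {a : ℝ} (ha0 : 0 ≤ a) (ha1 : a ≤ 1)
    (A : Matrix (Fin d) (Fin r) ℝ) (x : Fin d → ℝ) :
    evnorm (a • ((A * Aᵀ) *ᵥ x - x)) ^ 2 ≤ a * evnorm x ^ 2 * (l2OpNorm A ^ 4 + 1) := by
  have hsq : a ^ 2 ≤ a := by nlinarith
  rw [evnorm_smul, mul_pow, sq_abs]
  calc a ^ 2 * evnorm ((A * Aᵀ) *ᵥ x - x) ^ 2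
      ≤ a * ((l2OpNorm A ^ 4 + 1) * evnorm x ^ 2) :=
        mul_le_mul hsq (evnorm_mul_transpose_mulVec_sub_sq_le A x) (sq_nonneg _) ha0
    _ = a * evnorm x ^ 2 * (l2OpNorm A ^ 4 + 1) := by ring

section RandomMatrix

variable {Ω : Type*} [MeasurableSpace Ω] {μ : Measure Ω} [IsProbabilityMeasure μ] {d r : ℕ}
  {B : Ω → Fin d → Fin r → ℝ} {a : ℝ}

lemma integral_evnorm_smul_mul_transpose_mulVec_sub_sq_le (ha0 : 0 ≤ a) (ha1 : a ≤ 1) {L : ℝ}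
    (hmom : Integrable (fun ω => l2OpNorm (of (B ω)) ^ 4) μ)
    (hL : ∫ ω, l2OpNorm (of (B ω)) ^ 4 ∂μ ≤ L ^ 2) (x : Fin d → ℝ) :
    ∫ ω, evnorm (a • ((of (B ω) * (of (B ω))ᵀ) *ᵥ x - x)) ^ 2 ∂μ ≤
      a * evnorm x ^ 2 * (L ^ 2 + 1) := by
  calc ∫ ω, evnorm (a • ((of (B ω) * (of (B ω))ᵀ) *ᵥ x - x)) ^ 2 ∂μ
      ≤ ∫ ω, a * evnorm x ^ 2 * (l2OpNorm (of (B ω)) ^ 4 + 1) ∂μ :=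
        integral_mono_of_nonneg (.of_forall fun _ => sq_nonneg _)
          ((hmom.add (integrable_const 1)).const_mul _)
          (.of_forall fun ω => evnorm_smul_mul_transpose_mulVec_sub_sq_le ha0 ha1 _ x)
    _ = a * evnorm x ^ 2 * (∫ ω, l2OpNorm (of (B ω)) ^ 4 ∂μ + 1) := by
        rw [integral_const_mul, integral_add hmom (integrable_const 1), integral_const,
          probReal_univ, one_smul]
    _ ≤ a * evnorm x ^ 2 * (L ^ 2 + 1) := by gcongr

lemma memLp_two_smul_mul_transpose_mulVec_sub_apply (ha0 : 0 ≤ a) (ha1 : a ≤ 1)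
    (hB : Measurable B)
    (hmom : Integrable (fun ω => l2OpNorm (of (B ω)) ^ 4) μ) (x : Fin d → ℝ) (i : Fin d) :
    MemLp (fun ω => (a • ((of (B ω) * (of (B ω))ᵀ) *ᵥ x - x)) i) 2 μ := by
  have hmeas : Measurable fun ω => (a • ((of (B ω) * (of (B ω))ᵀ) *ᵥ x - x)) i :=
    (measurable_pi_apply i).comp
      ((continuous_smul_mul_transpose_mulVec_sub a x).measurable.comp hB)
  rw [memLp_two_iff_integrable_sq hmeas.aestronglyMeasurable]
  refine ((hmom.add (integrable_const 1)).const_mul (a * evnorm x ^ 2)).mono'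
    (hmeas.pow_const 2).aestronglyMeasurable (.of_forall fun ω => ?_)
  rw [Real.norm_of_nonneg (sq_nonneg _)]
  exact (sq_le_evnorm_sq _ i).trans (evnorm_smul_mul_transpose_mulVec_sub_sq_le ha0 ha1 _ x)

lemma evnorm_integral_smul_mul_transpose_mulVec_sub_le {δ : ℝ} (ha0 : 0 ≤ a) (x : Fin d → ℝ)
    (hproj : ∀ i, Integrable (fun ω =>
      ((of (B ω) * (of (B ω))ᵀ) *ᵥ ((evnorm x)⁻¹ • x)) i) μ)
    (hbias : evnorm ((fun i => ∫ ω, ((of (B ω) * (of (B ω))ᵀ) *ᵥ ((evnorm x)⁻¹ • x)) i ∂μ)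
      - (evnorm x)⁻¹ • x) ≤ Real.sqrt δ) :
    evnorm (fun i => ∫ ω, (a • ((of (B ω) * (of (B ω))ᵀ) *ᵥ x - x)) i ∂μ) ≤
      a * evnorm x * Real.sqrt δ := by
  have hmean : (fun i => ∫ ω, (a • ((of (B ω) * (of (B ω))ᵀ) *ᵥ x - x)) i ∂μ) =
      (a * evnorm x) • ((fun i => ∫ ω, ((of (B ω) * (of (B ω))ᵀ) *ᵥ ((evnorm x)⁻¹ • x)) i ∂μ)
        - (evnorm x)⁻¹ • x) := by
    ext i
    simp only [mulVec_sub_eq_evnorm_smul _ x, Pi.smul_apply, Pi.sub_apply, smul_eq_mul]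
    rw [integral_const_mul, integral_const_mul, integral_sub (hproj i) (integrable_const _),
      integral_const, probReal_univ, one_smul, mul_assoc]
  have hscale : 0 ≤ a * evnorm x := mul_nonneg ha0 (evnorm_nonneg x)
  rw [hmean, evnorm_smul, abs_of_nonneg hscale]
  exact mul_le_mul_of_nonneg_left hbias hscale

end RandomMatrix

theorem averaged_projection_error_bound_general {d r : ℕ}
    {ι : Type*} [Fintype ι] [Nonempty ι]
    {Ω : Type*} [MeasurableSpace Ω] (μ : Measure Ω) [IsProbabilityMeasure μ]
    (p : ι → Fin d → ℝ) (Cp : ℝ) (hpC : ∀ u, evnorm (p u) ≤ Cp)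
    (α : ι → ℝ) (hα0 : ∀ u, 0 ≤ α u) (hα1 : ∀ u, α u ≤ 1)
    (B : ι → Ω → Fin d → Fin r → ℝ)
    (hmeas : ∀ u, Measurable (B u))
    (hindep : iIndepFun B μ)
    (L : ℝ)
    -- finite fourth operator-norm moments, bounded by L²
    (hmom : ∀ u, Integrable (fun ω => l2OpNorm (Matrix.of (B u ω)) ^ 4) μ)
    (hL : ∀ u, ∫ ω, l2OpNorm (Matrix.of (B u ω)) ^ 4 ∂μ ≤ L ^ 2)
    (δ : ℝ) (hδ : 0 ≤ δ)
    -- the projected unit vectors are integrable, so that their expectations are meaningful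
    (hproj : ∀ u i, Integrable (fun ω =>
      ((Matrix.of (B u ω) * (Matrix.of (B u ω))ᵀ).mulVec ((evnorm (p u))⁻¹ • p u)) i) μ)
    -- bounded bias
    (hbias : ∀ u, evnorm ((fun i => ∫ ω,
        ((Matrix.of (B u ω) * (Matrix.of (B u ω))ᵀ).mulVec ((evnorm (p u))⁻¹ • p u)) i ∂μ)
      - (evnorm (p u))⁻¹ • p u) ≤ Real.sqrt δ) :
    ∫ ω, evnorm ((Fintype.card ι : ℝ)⁻¹ •
        ∑ u, α u • ((Matrix.of (B u ω) * (Matrix.of (B u ω))ᵀ).mulVec (p u) - p u)) ^ 2 ∂μ ≤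
      Cp ^ 2 * δ + (Fintype.card ι : ℝ)⁻¹ *
        (Finset.univ.sup' Finset.univ_nonempty fun u => α u * evnorm (p u) ^ 2) * (L ^ 2 + 1) := by
  set n : ℝ := (Fintype.card ι : ℝ)
  set K := Finset.univ.sup' Finset.univ_nonempty fun u => α u * evnorm (p u) ^ 2
  set X : ι → Ω → Fin d → ℝ := fun u ω => α u • ((of (B u ω) * (of (B u ω))ᵀ) *ᵥ p u - p u)
  change ∫ ω, evnorm (n⁻¹ • ∑ u, X u ω) ^ 2 ∂μ ≤ _
  have hind : Pairwise fun u v => X u ⟂ᵢ[μ] X v := fun u v huv =>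
    (hindep.indepFun huv).comp (continuous_smul_mul_transpose_mulVec_sub _ _).measurable
      (continuous_smul_mul_transpose_mulVec_sub _ _).measurable
  have hmean (u : ι) : evnorm (fun i => ∫ ω, X u ω i ∂μ) ≤ Cp * Real.sqrt δ :=
    (evnorm_integral_smul_mul_transpose_mulVec_sub_le (hα0 u) _ (hproj u) (hbias u)).trans <|
      mul_le_mul_of_nonneg_right
        ((mul_le_of_le_one_left (evnorm_nonneg _) (hα1 u)).trans (hpC u)) (Real.sqrt_nonneg δ)
  have hsecond (u : ι) : ∫ ω, evnorm (X u ω) ^ 2 ∂μ ≤ K * (L ^ 2 + 1) :=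
    (integral_evnorm_smul_mul_transpose_mulVec_sub_sq_le (hα0 u) (hα1 u) (hmom u) (hL u) _).trans <|
      mul_le_mul_of_nonneg_right (Finset.le_sup' (fun u => α u * evnorm (p u) ^ 2)
        (Finset.mem_univ u)) (by positivity)
  have hn : 0 < n := Nat.cast_pos.mpr Fintype.card_pos
  calc ∫ ω, evnorm (n⁻¹ • ∑ u, X u ω) ^ 2 ∂μ = n⁻¹ ^ 2 * ∫ ω, evnorm (∑ u, X u ω) ^ 2 ∂μ := by
        simp only [evnorm_smul, mul_pow, sq_abs, integral_const_mul]
    _ ≤ n⁻¹ ^ 2 * (evnorm (∑ u, fun i => ∫ ω, X u ω i ∂μ) ^ 2 +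
          ∑ u, ∫ ω, evnorm (X u ω) ^ 2 ∂μ) := by
        gcongr
        exact integral_evnorm_sum_sq_le_of_pairwise_indepFun (fun u i =>
          memLp_two_smul_mul_transpose_mulVec_sub_apply (hα0 u) (hα1 u) (hmeas u) (hmom u) _ i) hind
    _ ≤ n⁻¹ ^ 2 * ((n * (Cp * Real.sqrt δ)) ^ 2 + n * (K * (L ^ 2 + 1))) := by
        gcongr
        · exact evnorm_nonneg _
        · exact (evnorm_sum_le _ _).trans (Fintype.sum_le_card_mul hmean)
        · exact Fintype.sum_le_card_mul hsecond
    _ = Cp ^ 2 * δ + n⁻¹ * K * (L ^ 2 + 1) := by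
        field_simp
        rw [Real.sq_sqrt hδ]

/-- Upper bound on the expected squared error of the averaged projected update: for a nonempty
finite family of mutually independent random `d × r` matrices `(B_u)` with
`E[‖B_u‖⁴] ≤ L²` and bias `‖E[B_u B_uᵀ p̄_u] − p̄_u‖₂ ≤ √δ` on the unit normalizations
`p̄_u = p_u/‖p_u‖₂` of nonzero vectors `p_u` with `‖p_u‖₂ ≤ C_p`, and weights `0 ≤ α_u ≤ 1`,
`E[‖(1/|S|) ∑_u α_u (B_u B_uᵀ p_u − p_u)‖₂²]
  ≤ C_p² δ + (1/|S|) (max_u α_u ‖p_u‖₂²)(L² + 1)`. -/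
theorem averaged_projection_error_bound {d r : ℕ} (hd : 0 < d) (hr : 0 < r)
    {ι : Type*} [Fintype ι] [Nonempty ι]
    {Ω : Type*} [MeasurableSpace Ω] (μ : Measure Ω) [IsProbabilityMeasure μ]
    (p : ι → Fin d → ℝ) (Cp : ℝ) (hp0 : ∀ u, p u ≠ 0) (hpC : ∀ u, evnorm (p u) ≤ Cp)
    (α : ι → ℝ) (hα0 : ∀ u, 0 ≤ α u) (hα1 : ∀ u, α u ≤ 1)
    (B : ι → Ω → Fin d → Fin r → ℝ)
    (hmeas : ∀ u, Measurable (B u))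
    (hindep : iIndepFun B μ)
    (L : ℝ)
    -- finite fourth operator-norm moments, bounded by L²
    (hmom : ∀ u, Integrable (fun ω => l2OpNorm (Matrix.of (B u ω)) ^ 4) μ)
    (hL : ∀ u, ∫ ω, l2OpNorm (Matrix.of (B u ω)) ^ 4 ∂μ ≤ L ^ 2)
    (δ : ℝ) (hδ : 0 ≤ δ)
    -- the projected unit vectors are integrable, so that their expectations are meaningful
    (hproj : ∀ u i, Integrable (fun ω =>
      ((Matrix.of (B u ω) * (Matrix.of (B u ω))ᵀ).mulVec ((evnorm (p u))⁻¹ • p u)) i) μ)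
    -- bounded bias
    (hbias : ∀ u, evnorm ((fun i => ∫ ω,
        ((Matrix.of (B u ω) * (Matrix.of (B u ω))ᵀ).mulVec ((evnorm (p u))⁻¹ • p u)) i ∂μ)
      - (evnorm (p u))⁻¹ • p u) ≤ Real.sqrt δ) :
    ∫ ω, evnorm ((Fintype.card ι : ℝ)⁻¹ •
        ∑ u, α u • ((Matrix.of (B u ω) * (Matrix.of (B u ω))ᵀ).mulVec (p u) - p u)) ^ 2 ∂μ ≤
      Cp ^ 2 * δ + (Fintype.card ι : ℝ)⁻¹ *
        (Finset.univ.sup' Finset.univ_nonempty fun u => α u * evnorm (p u) ^ 2) * (L ^ 2 + 1) :=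
  averaged_projection_error_bound_general μ p Cp hpC α hα0 hα1 B hmeas hindep L hmom hL δ hδ hproj
    hbias
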